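/- Let m ≥ 3 be odd and suppose the polynomials f(R,X) = Ā + Ā_2 R^{m-3}X² + Ā_4 R^{m-5}X⁴ + ··· + Ā_{m-1}X^{m-1} + Ā_0 R^{m-1} and g(R,X) = B̄X + B̄_1 R^{m-1}X + B̄_3 R^{m-3}X³ + ··· + B̄_m X^m + B̄_0' R^{m} have real coefficients. Then the number of common real zeros (R,X) with R > 0 at which the Jacobian of (f,g) is nonsingular is at most m, i.e., the system has at most m simple solutions in the half-plane R > 0. -/

import Mathlib

/-- `f(R,X) = Ā + Ā₂ R^{m-3}X² + Ā₄ R^{m-5}X⁴ + ⋯ + Ā_{m-1}X^{m-1} + Ā₀ R^{m-1}`,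
with `Ac t` standing for `Ā_{2t}`. -/
noncomputable def fOdd (m : ℕ) (A A0 : ℝ) (Ac : ℕ → ℝ) (R X : ℝ) : ℝ :=
  A + A0 * R ^ (m - 1) +
    ∑ t ∈ Finset.Icc 1 ((m - 1) / 2), Ac t * R ^ (m - 1 - 2 * t) * X ^ (2 * t)

/-- `g(R,X) = B̄X + B̄₁ R^{m-1}X + B̄₃ R^{m-3}X³ + ⋯ + B̄_m X^m + B̄₀' R^m`,
with `Bc t` standing for `B̄_{2t+1}`. -/
noncomputable def gOdd (m : ℕ) (B B0 : ℝ) (Bc : ℕ → ℝ) (R X : ℝ) : ℝ :=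
  B * X + B0 * R ^ m +
    ∑ t ∈ Finset.range ((m - 1) / 2 + 1), Bc t * R ^ (m - 1 - 2 * t) * X ^ (2 * t + 1)

/-- Jacobian determinant of the pair `(f, g)` at `(R, X)`. -/
noncomputable def jacDet (f g : ℝ → ℝ → ℝ) (R X : ℝ) : ℝ :=
  deriv (fun r => f r X) R * deriv (fun x => g R x) X -
    deriv (fun x => f R x) X * deriv (fun r => g r X) R

/-!
Put `u = X / R`. For `R ≠ 0`, `f = A + R ^ (m - 1) F(u)` and `g = B X + R ^ m G(u)` with
polynomials `F`, `G`, so at a common zero `R ^ (m - 1) F(u) = -A` and `R ^ (m - 1) G(u) = -B u`;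
hence `u` is a root of `h = B u F - A G`, of degree at most `m`. Computing the partial
derivatives through this representation gives `jacDet = (m - 1) R ^ (m - 2) h'(u)` at common
zeros, so simple zeros have slopes that are simple roots of `h` (in particular `h ≠ 0`). The
slope determines a simple zero: `R ^ (m - 1)` is recovered from `F(u)` or `G(u)`, and if both
vanish then `A = B u = 0` and `h'(u) = 0`.
-/

open Polynomial

/-- For `r ≠ 0`, the degree-`n` homogenization of `p` evaluated at `(r, x)`. -/
noncomputable def homEval (p : ℝ[X]) (n : ℕ) (r x : ℝ) : ℝ :=
  r ^ n * p.eval (x / r)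

theorem hasDerivAt_homEval_right (p : ℝ[X]) (n : ℕ) (r x : ℝ) :
    HasDerivAt (fun x => homEval p n r x) (r ^ n * p.derivative.eval (x / r) / r) x := by
  refine (((p.hasDerivAt (x / r)).comp x ((hasDerivAt_id x).div_const r)).const_mul
    (r ^ n)).congr_deriv ?_
  simp only [mul_div_assoc, mul_one_div]

theorem hasDerivAt_homEval_left (p : ℝ[X]) (n : ℕ) {r : ℝ} (hr : r ≠ 0) (x : ℝ) :
    HasDerivAt (fun r => homEval p n r x)
      (r ^ n * (n * p.eval (x / r) - x / r * p.derivative.eval (x / r)) / r) r := by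
  have hdiv : HasDerivAt (fun r => x / r) (-(x / r) / r) r := by
    refine ((hasDerivAt_inv hr).const_mul x).congr_deriv ?_
    field_simp
  refine ((hasDerivAt_pow n r).mul ((p.hasDerivAt (x / r)).comp r hdiv)).congr_deriv ?_
  rcases n with _ | n
  · simp only [Function.comp, CharP.cast_eq_zero, zero_mul, pow_zero]; ring
  · simp only [Function.comp, Nat.add_sub_cancel, pow_succ]
    field_simp
    push_cast
    ring

noncomputable def fOddPoly (m : ℕ) (A0 : ℝ) (Ac : ℕ → ℝ) : ℝ[X] :=
  C A0 + ∑ t ∈ Finset.Icc 1 ((m - 1) / 2), C (Ac t) * X ^ (2 * t)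

noncomputable def gOddPoly (m : ℕ) (B0 : ℝ) (Bc : ℕ → ℝ) : ℝ[X] :=
  C B0 + ∑ t ∈ Finset.range ((m - 1) / 2 + 1), C (Bc t) * X ^ (2 * t + 1)

theorem fOdd_eq_add_homEval (m : ℕ) (A A0 : ℝ) (Ac : ℕ → ℝ) {R : ℝ} (hR : R ≠ 0) (X : ℝ) :
    fOdd m A A0 Ac R X = A + homEval (fOddPoly m A0 Ac) (m - 1) R X := by
  simp only [fOdd, homEval, fOddPoly, eval_add, eval_C, eval_finsetSum, eval_mul, eval_pow,
    eval_X, mul_add, Finset.mul_sum, add_assoc]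
  congr 2
  · ring
  refine Finset.sum_congr rfl fun t ht => ?_
  have h2t : 2 * t ≤ m - 1 := by have := (Finset.mem_Icc.mp ht).2; omega
  rw [div_pow, pow_sub₀ R hR h2t]
  field_simp

theorem gOdd_eq_add_homEval {m : ℕ} (hm : 1 ≤ m) (B B0 : ℝ) (Bc : ℕ → ℝ) {R : ℝ} (hR : R ≠ 0)
    (X : ℝ) : gOdd m B B0 Bc R X = B * X + homEval (gOddPoly m B0 Bc) m R X := by
  simp only [gOdd, homEval, gOddPoly, eval_add, eval_C, eval_finsetSum, eval_mul, eval_pow,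
    eval_X, mul_add, Finset.mul_sum, add_assoc]
  congr 2
  · ring
  refine Finset.sum_congr rfl fun t ht => ?_
  have h2t : 2 * t + 1 ≤ m := by have := Finset.mem_range.mp ht; omega
  rw [show m - 1 - 2 * t = m - (2 * t + 1) by omega, div_pow, pow_sub₀ R hR h2t]
  field_simp

theorem natDegree_fOddPoly_le (m : ℕ) (A0 : ℝ) (Ac : ℕ → ℝ) :
    (fOddPoly m A0 Ac).natDegree ≤ m - 1 :=
  natDegree_add_le_of_degree_le (by simp) <| natDegree_sum_le_of_forall_le _ _ fun t ht =>
    (natDegree_C_mul_X_pow_le _ _).trans (by have := (Finset.mem_Icc.mp ht).2; omega)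

theorem natDegree_gOddPoly_le {m : ℕ} (hm : 1 ≤ m) (B0 : ℝ) (Bc : ℕ → ℝ) :
    (gOddPoly m B0 Bc).natDegree ≤ m :=
  natDegree_add_le_of_degree_le (by simp) <| natDegree_sum_le_of_forall_le _ _ fun t ht =>
    (natDegree_C_mul_X_pow_le _ _).trans (by have := Finset.mem_range.mp ht; omega)

section partialDerivs

variable {m : ℕ} (A A0 B B0 : ℝ) (Ac Bc : ℕ → ℝ) {R : ℝ} (hR : R ≠ 0) (X : ℝ)
include hR

theorem deriv_fOdd_left : deriv (fun r => fOdd m A A0 Ac r X) R =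
    R ^ (m - 1) * ((m - 1 : ℕ) * (fOddPoly m A0 Ac).eval (X / R)
      - X / R * (fOddPoly m A0 Ac).derivative.eval (X / R)) / R := by
  have hev : (fun r => fOdd m A A0 Ac r X) =ᶠ[nhds R]
      fun r => A + homEval (fOddPoly m A0 Ac) (m - 1) r X :=
    (eventually_ne_nhds hR).mono fun r hr => fOdd_eq_add_homEval m A A0 Ac hr X
  exact hev.deriv_eq.trans ((hasDerivAt_homEval_left _ _ hR X).const_add A).deriv

theorem deriv_fOdd_right : deriv (fun x => fOdd m A A0 Ac R x) X =
    R ^ (m - 1) * (fOddPoly m A0 Ac).derivative.eval (X / R) / R := by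
  simp only [fOdd_eq_add_homEval m A A0 Ac hR]
  exact ((hasDerivAt_homEval_right _ _ R X).const_add A).deriv

theorem deriv_gOdd_left (hm : 1 ≤ m) : deriv (fun r => gOdd m B B0 Bc r X) R =
    R ^ m * (m * (gOddPoly m B0 Bc).eval (X / R)
      - X / R * (gOddPoly m B0 Bc).derivative.eval (X / R)) / R := by
  have hev : (fun r => gOdd m B B0 Bc r X) =ᶠ[nhds R]
      fun r => B * X + homEval (gOddPoly m B0 Bc) m r X :=
    (eventually_ne_nhds hR).mono fun r hr => gOdd_eq_add_homEval hm B B0 Bc hr X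
  exact hev.deriv_eq.trans ((hasDerivAt_homEval_left _ _ hR X).const_add _).deriv

theorem deriv_gOdd_right (hm : 1 ≤ m) : deriv (fun x => gOdd m B B0 Bc R x) X =
    B + R ^ m * (gOddPoly m B0 Bc).derivative.eval (X / R) / R := by
  simp only [gOdd_eq_add_homEval hm B B0 Bc hR]
  exact (((hasDerivAt_id X).const_mul B).add (hasDerivAt_homEval_right _ _ R X)).deriv.trans
    (by simp)

end partialDerivs

/-- Substituting `X = u R` in `f = g = 0` and eliminating `R ^ (m - 1)` leaves this polynomial
in the slope `u`. -/
noncomputable def slopePoly (m : ℕ) (A A0 : ℝ) (Ac : ℕ → ℝ) (B B0 : ℝ) (Bc : ℕ → ℝ) : ℝ[X] :=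
  C B * X * fOddPoly m A0 Ac - C A * gOddPoly m B0 Bc

theorem natDegree_slopePoly_le {m : ℕ} (hm : 1 ≤ m) (A A0 : ℝ) (Ac : ℕ → ℝ) (B B0 : ℝ)
    (Bc : ℕ → ℝ) : (slopePoly m A A0 Ac B B0 Bc).natDegree ≤ m := by
  have hXF : (C B * X * fOddPoly m A0 Ac).natDegree ≤ m :=
    (natDegree_mul_le_of_le ((natDegree_C_mul_le B X).trans natDegree_X_le)
      (natDegree_fOddPoly_le m A0 Ac)).trans (by omega)
  have hG : (C A * gOddPoly m B0 Bc).natDegree ≤ m :=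
    (natDegree_C_mul_le A _).trans (natDegree_gOddPoly_le hm B0 Bc)
  exact (natDegree_sub_le_of_le hXF hG).trans (max_self m).le

section commonZero

variable {m : ℕ} (hm : 1 ≤ m) {A A0 B B0 : ℝ} {Ac Bc : ℕ → ℝ} {R X : ℝ} (hR : R ≠ 0)
  (hf : fOdd m A A0 Ac R X = 0) (hg : gOdd m B B0 Bc R X = 0)
include hm hR hf hg

theorem pow_mul_eval_of_common_zero :
    R ^ (m - 1) * (fOddPoly m A0 Ac).eval (X / R) = -A ∧
      R ^ (m - 1) * (gOddPoly m B0 Bc).eval (X / R) = -(B * (X / R)) := by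
  rw [fOdd_eq_add_homEval m A A0 Ac hR, homEval] at hf
  rw [gOdd_eq_add_homEval hm B B0 Bc hR, homEval] at hg
  obtain ⟨n, rfl⟩ := Nat.exists_eq_add_of_le' hm
  simp only [Nat.add_sub_cancel] at hf ⊢
  refine ⟨by linarith, ?_⟩
  field_simp
  linear_combination hg

theorem jacDet_eq_of_common_zero :
    jacDet (fOdd m A A0 Ac) (gOdd m B B0 Bc) R X =
      (m - 1 : ℕ) * R ^ (m - 1) / R * (slopePoly m A A0 Ac B B0 Bc).derivative.eval (X / R) := by
  obtain ⟨hF, hG⟩ := pow_mul_eval_of_common_zero hm hR hf hg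
  rw [jacDet, deriv_fOdd_left A A0 Ac hR, deriv_fOdd_right A A0 Ac hR,
    deriv_gOdd_left B B0 Bc hR X hm, deriv_gOdd_right B B0 Bc hR X hm]
  simp only [slopePoly, derivative_sub, derivative_mul, derivative_C, derivative_X, eval_sub,
    eval_add, eval_mul, eval_C, eval_X, eval_one, zero_mul, zero_add]
  obtain ⟨n, rfl⟩ := Nat.exists_eq_add_of_le' hm
  simp only [Nat.add_sub_cancel, pow_succ] at hF hG ⊢
  generalize X / R = u at hF hG ⊢
  push_cast
  field_simp
  linear_combination n * (gOddPoly (n + 1) B0 Bc).derivative.eval u * hF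
    - (n + 1) * (fOddPoly (n + 1) A0 Ac).derivative.eval u * hG

end commonZero

def simpleZerosPos (f g : ℝ → ℝ → ℝ) : Set (ℝ × ℝ) :=
  {p | 0 < p.1 ∧ f p.1 p.2 = 0 ∧ g p.1 p.2 = 0 ∧ jacDet f g p.1 p.2 ≠ 0}

section simpleZeros

variable {m : ℕ} {A A0 B B0 : ℝ} {Ac Bc : ℕ → ℝ} {p : ℝ × ℝ}

theorem slopePoly_derivative_eval_ne_zero (hm : 1 ≤ m)
    (hp : p ∈ simpleZerosPos (fOdd m A A0 Ac) (gOdd m B B0 Bc)) :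
    (slopePoly m A A0 Ac B B0 Bc).derivative.eval (p.2 / p.1) ≠ 0 := by
  obtain ⟨hR, hf, hg, hJ⟩ := hp
  rw [jacDet_eq_of_common_zero hm hR.ne' hf hg] at hJ
  exact right_ne_zero_of_mul hJ

theorem slope_mem_roots_slopePoly (hm : 1 ≤ m)
    (hp : p ∈ simpleZerosPos (fOdd m A A0 Ac) (gOdd m B B0 Bc)) :
    p.2 / p.1 ∈ (slopePoly m A A0 Ac B B0 Bc).roots := by
  have hd := slopePoly_derivative_eval_ne_zero hm hp
  obtain ⟨hR, hf, hg, -⟩ := hp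
  obtain ⟨hF, hG⟩ := pow_mul_eval_of_common_zero hm hR.ne' hf hg
  refine mem_roots'.mpr ⟨fun h0 => hd (by simp [h0]), ?_⟩
  have hρ : p.1 ^ (m - 1) ≠ 0 := pow_ne_zero _ hR.ne'
  refine (mul_eq_zero.mp ?_).resolve_left hρ
  simp only [slopePoly, eval_sub, eval_mul, eval_C, eval_X]
  linear_combination B * (p.2 / p.1) * hF - A * hG

theorem injOn_slope_simpleZerosPos (hm : 2 ≤ m) :
    Set.InjOn (fun p : ℝ × ℝ => p.2 / p.1)
      (simpleZerosPos (fOdd m A A0 Ac) (gOdd m B B0 Bc)) := by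
  rintro ⟨R₁, X₁⟩ hp₁ ⟨R₂, X₂⟩ hp₂ (hu : X₁ / R₁ = X₂ / R₂)
  have hd := slopePoly_derivative_eval_ne_zero (by omega) hp₁
  obtain ⟨hR₁, hf₁, hg₁, -⟩ := hp₁
  obtain ⟨hR₂, hf₂, hg₂, -⟩ := hp₂
  obtain ⟨hF₁, hG₁⟩ := pow_mul_eval_of_common_zero (by omega) hR₁.ne' hf₁ hg₁
  obtain ⟨hF₂, hG₂⟩ := pow_mul_eval_of_common_zero (by omega) hR₂.ne' hf₂ hg₂
  simp only at hd hF₁ hG₁ hF₂ hG₂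
  rw [← hu] at hF₂ hG₂
  set u := X₁ / R₁
  have hpow : R₁ ^ (m - 1) = R₂ ^ (m - 1) := by
    by_cases hF : (fOddPoly m A0 Ac).eval u = 0
    · by_cases hG : (gOddPoly m B0 Bc).eval u = 0
      · refine absurd ?_ hd
        simp only [slopePoly, derivative_sub, derivative_mul, derivative_C, derivative_X,
          eval_sub, eval_add, eval_mul, eval_C, eval_X, eval_one, zero_mul, zero_add]
        rw [hF, mul_zero] at hF₁
        rw [hG, mul_zero] at hG₁
        linear_combination B * hF + (fOddPoly m A0 Ac).derivative.eval u * hG₁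
          - (gOddPoly m B0 Bc).derivative.eval u * hF₁
      · exact mul_right_cancel₀ hG (hG₁.trans hG₂.symm)
    · exact mul_right_cancel₀ hF (hF₁.trans hF₂.symm)
  have hR : R₁ = R₂ := (pow_left_inj₀ hR₁.le hR₂.le (by omega)).mp hpow
  subst hR
  rw [div_left_inj' hR₁.ne'] at hu
  rw [hu]

end simpleZeros

theorem stmt19_general (m : ℕ) (hm : 3 ≤ m)
    (A A0 B B0 : ℝ) (Ac Bc : ℕ → ℝ) :
    {p : ℝ × ℝ | 0 < p.1 ∧ fOdd m A A0 Ac p.1 p.2 = 0 ∧ gOdd m B B0 Bc p.1 p.2 = 0 ∧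
        jacDet (fOdd m A A0 Ac) (gOdd m B B0 Bc) p.1 p.2 ≠ 0}.Finite ∧
    {p : ℝ × ℝ | 0 < p.1 ∧ fOdd m A A0 Ac p.1 p.2 = 0 ∧ gOdd m B B0 Bc p.1 p.2 = 0 ∧
        jacDet (fOdd m A A0 Ac) (gOdd m B B0 Bc) p.1 p.2 ≠ 0}.ncard ≤ m := by
  change (simpleZerosPos (fOdd m A A0 Ac) (gOdd m B B0 Bc)).Finite ∧ _ ≤ m
  set S := simpleZerosPos (fOdd m A A0 Ac) (gOdd m B B0 Bc)
  set h := slopePoly m A A0 Ac B B0 Bc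
  have hmaps : Set.MapsTo (fun p : ℝ × ℝ => p.2 / p.1) S (h.roots.toFinset : Set ℝ) :=
    fun p hp => Multiset.mem_toFinset.mpr (slope_mem_roots_slopePoly (by omega) hp)
  have hinj : Set.InjOn (fun p : ℝ × ℝ => p.2 / p.1) S := injOn_slope_simpleZerosPos (by omega)
  have hfin := h.roots.toFinset.finite_toSet
  refine ⟨hfin.of_injOn hmaps hinj, ?_⟩
  calc S.ncard ≤ (h.roots.toFinset : Set ℝ).ncard :=
        Set.ncard_le_ncard_of_injOn _ hmaps hinj hfin
    _ = h.roots.toFinset.card := Set.ncard_coe_finset _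
    _ ≤ h.roots.card := Multiset.toFinset_card_le _
    _ ≤ h.natDegree := card_roots' h
    _ ≤ m := natDegree_slopePoly_le (by omega) A A0 Ac B B0 Bc

/-- for `m ≥ 3` odd, the system `f = g = 0` has at most `m` common real zeros
`(R, X)` with `R > 0` at which the Jacobian of `(f, g)` is nonsingular, i.e. at most `m`
simple solutions in the half-plane `R > 0`. -/
theorem stmt19 (m : ℕ) (hm : 3 ≤ m) (hmo : Odd m)
    (A A0 B B0 : ℝ) (Ac Bc : ℕ → ℝ) :
    {p : ℝ × ℝ | 0 < p.1 ∧ fOdd m A A0 Ac p.1 p.2 = 0 ∧ gOdd m B B0 Bc p.1 p.2 = 0 ∧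
        jacDet (fOdd m A A0 Ac) (gOdd m B B0 Bc) p.1 p.2 ≠ 0}.Finite ∧
    {p : ℝ × ℝ | 0 < p.1 ∧ fOdd m A A0 Ac p.1 p.2 = 0 ∧ gOdd m B B0 Bc p.1 p.2 = 0 ∧
        jacDet (fOdd m A A0 Ac) (gOdd m B B0 Bc) p.1 p.2 ≠ 0}.ncard ≤ m :=
  stmt19_general m hm A A0 B B0 Ac Bc
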